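/- arXiv:1908.04553 — 8 statements merged into one kernel-verified Lean document; each statement's English description precedes it below -/
import Mathlib

section
/- Let N be a nonzero linear subspace of ℝ^{n+1}, let {v_1, …, v_m} be an orthonormal basis of the orthogonal complement N^⊥, and let x be a unit vector in ℝ^{n+1}. If S_N := S^n ∩ N is nonempty (equivalently N ≠ {0}), then the geodesic distance from x to S_N equals arcsin(√(Σ_{i=1}^m (x·v_i)^2)); that is, inf_{y ∈ S_N} arccos(x·y) = arcsin(‖P_{N^⊥} x‖), where P_{N^⊥} is the orthogonal projection onto N^⊥. -/
/-!
Split `x = P_N x + P_{Nᗮ} x`. For a unit `y ∈ N` we have `⟪x, y⟫ = ⟪P_N x, y⟫ ≤ ‖P_N x‖`, with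
equality at `y = P_N x / ‖P_N x‖` (or at any unit `y ∈ N` when `P_N x = 0`), so the distance is
`arccos ‖P_N x‖`. By Pythagoras `‖P_N x‖² + ‖P_{Nᗮ} x‖² = 1`, which turns this into
`arcsin ‖P_{Nᗮ} x‖`, and expanding `P_{Nᗮ} x` in the orthonormal basis `v` gives
`‖P_{Nᗮ} x‖² = Σᵢ ⟪x, vᵢ⟫²`.
-/

open scoped RealInnerProductSpace
open Submodule Set

section Orthonormal

variable {ι 𝕜 E : Type*} [RCLike 𝕜] [NormedAddCommGroup E] [InnerProductSpace 𝕜 E] [Fintype ι]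
  {v : ι → E} {K : Submodule 𝕜 E} [K.HasOrthogonalProjection]

theorem Orthonormal.starProjection_eq_sum (hv : Orthonormal 𝕜 v) (hK : span 𝕜 (range v) = K)
    (x : E) : K.starProjection x = ∑ i, inner 𝕜 (v i) x • v i := by
  subst hK
  apply eq_starProjection_of_mem_orthogonal
  · exact sum_mem fun i _ ↦ smul_mem _ _ (subset_span (mem_range_self i))
  · rw [← span_singleton_le_iff_mem, ← isOrtho_iff_le, isOrtho_span]
    rintro _ rfl _ ⟨i, rfl⟩
    rw [inner_sub_left, hv.inner_left_fintype, inner_conj_symm, sub_self]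

theorem Orthonormal.norm_starProjection_sq (hv : Orthonormal 𝕜 v) (hK : span 𝕜 (range v) = K)
    (x : E) : ‖K.starProjection x‖ ^ 2 = ∑ i, ‖inner 𝕜 (v i) x‖ ^ 2 := by
  rw [hv.starProjection_eq_sum hK, ← RCLike.ofReal_inj (K := 𝕜), RCLike.ofReal_pow,
    ← inner_self_eq_norm_sq_to_K, hv.inner_sum]
  simp only [RCLike.conj_mul, RCLike.ofReal_sum, RCLike.ofReal_pow]

end Orthonormal

theorem isGreatest_inner_unit_mem {E : Type*} [NormedAddCommGroup E] [InnerProductSpace ℝ E]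
    {K : Submodule ℝ E} [K.HasOrthogonalProjection] (hK : K ≠ ⊥) (x : E) :
    IsGreatest ((fun y ↦ ⟪x, y⟫) '' {y | ‖y‖ = 1 ∧ y ∈ K}) ‖K.starProjection x‖ := by
  set p := K.starProjection x
  have inner_eq : ∀ y ∈ K, ⟪x, y⟫ = ⟪p, y⟫ := fun y hy ↦ by
    rw [inner_starProjection_left_eq_right, starProjection_eq_self_iff.mpr hy]
  refine ⟨?_, ?_⟩
  · by_cases hp : p = 0
    · obtain ⟨z, hzK, hz⟩ := exists_mem_ne_zero_of_ne_bot hK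
      refine ⟨‖z‖⁻¹ • z, ⟨norm_smul_inv_norm hz, smul_mem _ _ hzK⟩, ?_⟩
      simp [inner_eq _ (smul_mem _ _ hzK), hp]
    · have hpK : p ∈ K := K.starProjection_apply_mem x
      refine ⟨‖p‖⁻¹ • p, ⟨norm_smul_inv_norm hp, smul_mem _ _ hpK⟩, ?_⟩
      show ⟪x, ‖p‖⁻¹ • p⟫ = ‖p‖
      rw [inner_eq _ (smul_mem _ _ hpK), real_inner_smul_right, real_inner_self_eq_norm_sq]
      field_simp
  · rintro _ ⟨y, ⟨hy, hyK⟩, rfl⟩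
    simpa [inner_eq y hyK, hy] using real_inner_le_norm p y

theorem Real.arccos_eq_arcsin_of_sq_add_sq {a b : ℝ} (ha : 0 ≤ a) (hb : 0 ≤ b)
    (hab : a ^ 2 + b ^ 2 = 1) : arccos a = arcsin b := by
  rw [arccos_eq_arcsin ha, ← eq_sub_of_add_eq' hab, sqrt_sq hb]

/-- The geodesic distance from a unit vector `x` to the subsphere `S_N = Sⁿ ∩ N`
(for a nonzero subspace `N` of `ℝ^{n+1}` with orthonormal basis `v` of `Nᗮ`)
equals `arcsin (√(Σᵢ (x ⬝ vᵢ)²)) = arcsin ‖P_{Nᗮ} x‖`. -/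
theorem sphere_geodesic_dist_to_subsphere (n m : ℕ)
    (N : Submodule ℝ (EuclideanSpace ℝ (Fin (n + 1)))) (hN : N ≠ ⊥)
    (v : Fin m → EuclideanSpace ℝ (Fin (n + 1)))
    (hv : Orthonormal ℝ v)
    (hspan : Submodule.span ℝ (Set.range v) = Nᗮ)
    (x : EuclideanSpace ℝ (Fin (n + 1))) (hx : ‖x‖ = 1) :
    sInf ((fun y => Real.arccos ⟪x, y⟫) ''
        {y : EuclideanSpace ℝ (Fin (n + 1)) | ‖y‖ = 1 ∧ y ∈ N}) =
      Real.arcsin (Real.sqrt (∑ i, (⟪x, v i⟫) ^ 2)) ∧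
    Real.sqrt (∑ i, (⟪x, v i⟫) ^ 2) =
      ‖(Submodule.orthogonalProjection Nᗮ x : EuclideanSpace ℝ (Fin (n + 1)))‖ := by
  have hsum : √(∑ i, ⟪x, v i⟫ ^ 2) = ‖Nᗮ.starProjection x‖ := by
    rw [← Real.sqrt_sq (norm_nonneg _), hv.norm_starProjection_sq hspan]
    simp [real_inner_comm]
  refine ⟨?_, hsum⟩
  rw [hsum, ← image_image Real.arccos (fun y ↦ ⟪x, y⟫),
    (Real.antitone_arccos.map_isGreatest (isGreatest_inner_unit_mem hN x)).csInf_eq]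
  refine Real.arccos_eq_arcsin_of_sq_add_sq (norm_nonneg _) (norm_nonneg _) ?_
  rw [← N.norm_sq_eq_add_norm_sq_starProjection x, hx, one_pow]
end

section
/- Let N be a nonzero linear subspace of ℝ^{n+1}, let {v_1, …, v_m} be an orthonormal basis of N^⊥, and let x be a unit vector in ℝ^{n+1}. Then the projection distance from x to S_N := S^n ∩ N equals √(Σ_{i=1}^m (x·v_i)^2) = ‖P_{N^⊥} x‖; that is, inf_{v ∈ S_N} √(1 − (x·v)^2) = ‖P_{N^⊥} x‖, where P_{N^⊥} is the orthogonal projection onto N^⊥. -/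
/-!
For a unit vector `y ∈ N` we have `⟪x, y⟫ = ⟪P_N x, y⟫ ≤ ‖P_N x‖`, with equality at
`y = P_N x / ‖P_N x‖` (or at any unit `y ∈ N` when `P_N x = 0`). Hence the infimum
of `√(1 - ⟪x, y⟫²)` is `√(1 - ‖P_N x‖²) = ‖P_{Nᗮ} x‖` by Pythagoras, and Parseval for
the orthonormal basis `v` of `Nᗮ` gives `‖P_{Nᗮ} x‖² = ∑ ⟪x, vᵢ⟫²`.
-/

open scoped RealInnerProductSpace

open Submodule Set

theorem Orthonormal.sum_sq_norm_inner_eq_norm_sq_starProjection {𝕜 E ι : Type*} [RCLike 𝕜]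
    [NormedAddCommGroup E] [InnerProductSpace 𝕜 E] [Fintype ι] {v : ι → E}
    (hv : Orthonormal 𝕜 v) {K : Submodule 𝕜 E} [K.HasOrthogonalProjection]
    (hK : span 𝕜 (range v) = K) (x : E) :
    ∑ i, ‖inner 𝕜 (v i) x‖ ^ 2 = ‖K.starProjection x‖ ^ 2 := by
  subst hK
  let b := (Module.Basis.span hv.linearIndependent).toOrthonormalBasis
    (by rw [funext (Module.Basis.span_apply hv.linearIndependent)]; exact orthonormal_span hv)
  rw [starProjection_apply, norm_coe, ← b.sum_sq_norm_inner_right]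
  simp [b]

namespace Submodule

variable {E : Type*} [NormedAddCommGroup E] [InnerProductSpace ℝ E]
  (K : Submodule ℝ E) [K.HasOrthogonalProjection]

theorem inner_starProjection_left_of_mem (x : E) {y : E} (hy : y ∈ K) :
    ⟪K.starProjection x, y⟫ = ⟪x, y⟫ := by
  rw [inner_starProjection_left_eq_right, starProjection_eq_self_iff.mpr hy]

theorem abs_inner_le_norm_starProjection (x : E) {y : E} (hy : y ∈ K) (hy₁ : ‖y‖ = 1) :
    |⟪x, y⟫| ≤ ‖K.starProjection x‖ := by
  simpa [hy₁, K.inner_starProjection_left_of_mem x hy] using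
    abs_real_inner_le_norm (K.starProjection x) y

theorem exists_unit_inner_eq_norm_starProjection (hK : K ≠ ⊥) (x : E) :
    ∃ y ∈ K, ‖y‖ = 1 ∧ ⟪x, y⟫ = ‖K.starProjection x‖ := by
  set p := K.starProjection x with hp
  by_cases hp₀ : p = 0
  · obtain ⟨y, hyK, hy⟩ := exists_mem_ne_zero_of_ne_bot hK
    have hy'K : ‖y‖⁻¹ • y ∈ K := K.smul_mem _ hyK
    refine ⟨_, hy'K, norm_smul_inv_norm hy, ?_⟩
    rw [hp₀, norm_zero, ← K.inner_starProjection_left_of_mem x hy'K, ← hp, hp₀,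
      inner_zero_left]
  · have hp'K : ‖p‖⁻¹ • p ∈ K := K.smul_mem _ (K.starProjection_apply_mem x)
    refine ⟨_, hp'K, norm_smul_inv_norm hp₀, ?_⟩
    rw [← K.inner_starProjection_left_of_mem x hp'K, ← hp, real_inner_smul_right,
      real_inner_self_eq_norm_sq]
    field_simp

theorem isLeast_sqrt_one_sub_inner_sq (hK : K ≠ ⊥) {x : E} (hx : ‖x‖ = 1) :
    IsLeast ((fun y => √(1 - ⟪x, y⟫ ^ 2)) '' {y | ‖y‖ = 1 ∧ y ∈ K})
      ‖Kᗮ.starProjection x‖ := by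
  have hpyth : 1 - ‖K.starProjection x‖ ^ 2 = ‖Kᗮ.starProjection x‖ ^ 2 := by
    linarith [hx ▸ norm_sq_eq_add_norm_sq_starProjection x K]
  constructor
  · obtain ⟨y, hyK, hy₁, hxy⟩ := K.exists_unit_inner_eq_norm_starProjection hK x
    refine ⟨y, ⟨hy₁, hyK⟩, ?_⟩
    dsimp only
    rw [hxy, hpyth, Real.sqrt_sq (norm_nonneg _)]
  · rintro _ ⟨y, ⟨hy₁, hyK⟩, rfl⟩
    have hxy : ⟪x, y⟫ ^ 2 ≤ ‖K.starProjection x‖ ^ 2 :=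
      sq_le_sq.mpr ((K.abs_inner_le_norm_starProjection x hyK hy₁).trans (le_abs_self _))
    dsimp only
    rw [← Real.sqrt_sq (norm_nonneg (Kᗮ.starProjection x)), ← hpyth]
    gcongr

end Submodule

/-- The projection distance from a unit vector `x` to the subsphere `S_N = Sⁿ ∩ N`
(for a nonzero subspace `N` of `ℝ^{n+1}` with orthonormal basis `v` of `Nᗮ`)
equals `√(Σᵢ (x ⬝ vᵢ)²) = ‖P_{Nᗮ} x‖`. -/
theorem sphere_projection_dist_to_subsphere (n m : ℕ)
    (N : Submodule ℝ (EuclideanSpace ℝ (Fin (n + 1)))) (hN : N ≠ ⊥)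
    (v : Fin m → EuclideanSpace ℝ (Fin (n + 1)))
    (hv : Orthonormal ℝ v)
    (hspan : Submodule.span ℝ (Set.range v) = Nᗮ)
    (x : EuclideanSpace ℝ (Fin (n + 1))) (hx : ‖x‖ = 1) :
    sInf ((fun y => Real.sqrt (1 - (⟪x, y⟫) ^ 2)) ''
        {y : EuclideanSpace ℝ (Fin (n + 1)) | ‖y‖ = 1 ∧ y ∈ N}) =
      Real.sqrt (∑ i, (⟪x, v i⟫) ^ 2) ∧
    Real.sqrt (∑ i, (⟪x, v i⟫) ^ 2) =
      ‖(Submodule.orthogonalProjectionOnto Nᗮ x : EuclideanSpace ℝ (Fin (n + 1)))‖ := by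
  have hsum : ∑ i, ⟪x, v i⟫ ^ 2 = ‖Nᗮ.starProjection x‖ ^ 2 := by
    simpa [real_inner_comm] using hv.sum_sq_norm_inner_eq_norm_sq_starProjection hspan x
  have hsqrt : √(∑ i, ⟪x, v i⟫ ^ 2) = ‖Nᗮ.starProjection x‖ := by
    rw [hsum, Real.sqrt_sq (norm_nonneg _)]
  exact ⟨(N.isLeast_sqrt_one_sub_inner_sq hN hx).csInf_eq.trans hsqrt.symm, hsqrt⟩
end

section
/- Let X be a real (n+1)×d matrix. There exists an orthonormal basis v_1, …, v_{n+1} of ℝ^{n+1} consisting of eigenvectors of X Xᵀ with eigenvalues λ_1 ≤ … ≤ λ_{n+1} in increasing order, such that for every m with 1 ≤ m ≤ n+1 the matrix V_m = [v_1 | … | v_m] minimizes ‖Xᵀ V‖_F² over all (n+1)×m matrices V with orthonormal columns, and the subspaces N_m := span(v_1, …, v_m)^⊥ are nested: N_{m+1} ⊆ N_m for all m. Consequently the best approximating subspheres S_{N_m} := S^n ∩ N_m in the projection distance satisfy S_{N_{m+1}} ⊆ S_{N_m}. -/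
/-!
In an orthonormal eigenbasis `b` of `T = X Xᵀ` with increasing eigenvalues `μ`, a matrix `V` with
orthonormal columns `v₁, …, vₘ` has `‖Xᵀ V‖_F² = ∑ⱼ ⟪T vⱼ, vⱼ⟫ = ∑ᵢ μᵢ cᵢ`, where the weights
`cᵢ = ∑ⱼ ⟪bᵢ, vⱼ⟫²` lie in `[0, 1]` (Bessel) and add up to `m` (Parseval). Such a weighted sum is
at least the sum of the `m` smallest eigenvalues, which is the value at `V = [b₁ | … | bₘ]`
(Ky Fan). The complements of the spans of `b₁, …, bₘ` are nested because the spans increase.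
-/

open scoped Matrix

noncomputable def frobSq {α β : Type*} [Fintype α] [Fintype β]
    (M : Matrix α β ℝ) : ℝ :=
  ∑ i, ∑ j, (M i j) ^ 2

open scoped RealInnerProductSpace
open Finset WithLp

theorem Monotone.sum_castLE_le_sum_mul {N m : ℕ} (hm : m ≤ N) {μ c : Fin N → ℝ}
    (hμ : Monotone μ) (hc₀ : ∀ i, 0 ≤ c i) (hc₁ : ∀ i, c i ≤ 1) (hc : ∑ i, c i = m) :
    ∑ j : Fin m, μ (Fin.castLE hm j) ≤ ∑ i, μ i * c i := by
  obtain _ | N := N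
  · obtain rfl : m = 0 := by omega
    simp
  set b : Fin (N + 1) → ℝ := fun i => if (i : ℕ) < m then 1 else 0
  have hfilter :
      univ.filter (fun i : Fin (N + 1) => (i : ℕ) < m) = univ.map (Fin.castLEEmb hm) := by
    ext i
    simp only [mem_filter, mem_univ, true_and, mem_map, Fin.castLEEmb_apply]
    exact ⟨fun hi => ⟨⟨i, hi⟩, rfl⟩, by rintro ⟨j, rfl⟩; exact j.isLt⟩
  have hb : ∑ j : Fin m, μ (Fin.castLE hm j) = ∑ i, μ i * b i := by
    simp [b, mul_ite, ← sum_filter, hfilter]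
  -- `t` separates the first `m` values of `μ` from the others, and `c - b` has total mass zero.
  set t := μ ⟨m - 1, by omega⟩
  have hsep : ∀ i, t * (c i - b i) ≤ μ i * (c i - b i) := by
    intro i
    by_cases hi : (i : ℕ) < m
    · have : μ i ≤ t := hμ (Fin.mk_le_mk.mpr (by omega))
      simp only [b, hi, if_true]
      nlinarith [hc₁ i]
    · have : t ≤ μ i := hμ (Fin.le_def.mpr (by simp only [tsub_le_iff_right]; omega))
      simp only [b, hi, if_false]
      nlinarith [hc₀ i]
  have hmass : ∑ i, (c i - b i) = 0 := by
    simp [b, sum_sub_distrib, hc, hfilter]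
  have hgap : 0 ≤ ∑ i, μ i * (c i - b i) :=
    calc 0 = ∑ i, t * (c i - b i) := by rw [← mul_sum, hmass, mul_zero]
      _ ≤ ∑ i, μ i * (c i - b i) := sum_le_sum fun i _ => hsep i
  rw [hb]
  simp only [mul_sub, sum_sub_distrib] at hgap
  linarith

namespace LinearMap.IsSymmetric

variable {E : Type*} [NormedAddCommGroup E] [InnerProductSpace ℝ E] {T : E →ₗ[ℝ] E}

theorem inner_apply_self_eq_sum {ι : Type*} [Fintype ι] (hT : T.IsSymmetric)
    (b : OrthonormalBasis ι ℝ E) {μ : ι → ℝ} (hb : ∀ i, T (b i) = μ i • b i) (x : E) :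
    ⟪T x, x⟫ = ∑ i, μ i * ⟪b i, x⟫ ^ 2 := by
  rw [← b.sum_inner_mul_inner]
  refine sum_congr rfl fun i _ => ?_
  rw [hT, hb, real_inner_smul_right, real_inner_comm x]
  ring

theorem exists_orthonormalBasis_monotone_eigenvalues [FiniteDimensional ℝ E] {N : ℕ}
    (hT : T.IsSymmetric) (hN : Module.finrank ℝ E = N) :
    ∃ (b : OrthonormalBasis (Fin N) ℝ E) (μ : Fin N → ℝ), Monotone μ ∧
      ∀ i, T (b i) = μ i • b i :=
  ⟨(hT.eigenvectorBasis hN).reindex Fin.revPerm, hT.eigenvalues hN ∘ Fin.rev,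
    (hT.eigenvalues_antitone hN).comp Fin.rev_anti, fun i => by simp⟩

theorem sum_castLE_eigenvalues_le_sum_inner_apply_self {N m : ℕ} (hm : m ≤ N)
    (hT : T.IsSymmetric) (b : OrthonormalBasis (Fin N) ℝ E) {μ : Fin N → ℝ} (hμ : Monotone μ)
    (hb : ∀ i, T (b i) = μ i • b i) {v : Fin m → E} (hv : Orthonormal ℝ v) :
    ∑ j : Fin m, μ (Fin.castLE hm j) ≤ ∑ j, ⟪T (v j), v j⟫ := by
  set c : Fin N → ℝ := fun i => ∑ j, ⟪b i, v j⟫ ^ 2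
  have hc₁ : ∀ i, c i ≤ 1 := fun i => by
    simpa [c, real_inner_comm, b.orthonormal.1 i] using
      hv.sum_inner_products_le (b i) (s := univ)
  have hc : ∑ i, c i = m := by
    rw [sum_comm]
    simp [b.sum_sq_inner_right, hv.1]
  calc ∑ j : Fin m, μ (Fin.castLE hm j) ≤ ∑ i, μ i * c i :=
        hμ.sum_castLE_le_sum_mul hm (fun i => by positivity) hc₁ hc
    _ = ∑ j, ⟪T (v j), v j⟫ := by
        simp only [hT.inner_apply_self_eq_sum b hb, c, mul_sum]
        exact sum_comm

end LinearMap.IsSymmetric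

namespace Matrix

theorem frobSq_eq_trace {m n : Type*} [Fintype m] [Fintype n] (M : Matrix m n ℝ) :
    frobSq M = (Mᵀ * M).trace := by
  simp only [frobSq, trace, diag, mul_apply, transpose_apply, sq]
  exact sum_comm

theorem orthonormal_toLp_transpose_iff {m n : Type*} [Fintype m] [DecidableEq n]
    {V : Matrix m n ℝ} :
    Orthonormal ℝ (fun j => toLp 2 (Vᵀ j)) ↔ Vᵀ * V = 1 := by
  simp [orthonormal_iff_ite, inner_matrix_col_col, ← Matrix.ext_iff, one_apply]

theorem frobSq_transpose_mul {l m n : Type*} [Fintype l] [Fintype m] [Fintype n]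
    [DecidableEq n] (X : Matrix n l ℝ) (W : Matrix n m ℝ) :
    frobSq (Xᵀ * W) = ∑ j, ⟪toEuclideanLin (X * Xᵀ) (toLp 2 (Wᵀ j)), toLp 2 (Wᵀ j)⟫ := by
  have hcol : ∀ j, (X * Xᵀ * W)ᵀ j = (X * Xᵀ) *ᵥ Wᵀ j := fun j => by
    ext; simp [mul_apply, mulVec, dotProduct, mul_comm]
  rw [frobSq_eq_trace, transpose_mul, transpose_transpose, trace]
  refine sum_congr rfl fun j _ => ?_
  rw [real_inner_comm, toLpLin_apply, ofLp_toLp, ← hcol, inner_matrix_col_col,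
    conjTranspose_eq_transpose_of_trivial, diag_apply, Matrix.mul_assoc, Matrix.mul_assoc]

end Matrix

open Matrix

/-- There is an orthonormal basis `u` of eigenvectors of `X Xᵀ` with eigenvalues in
increasing order such that for each `m` the matrix whose columns are `u 0, …, u (m-1)`
minimizes `‖Xᵀ V‖_F²` over matrices with orthonormal columns, the orthogonal
complements `N_m = span(u 0, …, u (m-1))ᗮ` are nested, and hence the corresponding
best approximating subspheres `S_{N_m} = Sⁿ ∩ N_m` are nested. -/
theorem pssa_sphere_nested (n d : ℕ) (X : Matrix (Fin (n + 1)) (Fin d) ℝ) :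
    ∃ (u : Fin (n + 1) → EuclideanSpace ℝ (Fin (n + 1))) (μ : Fin (n + 1) → ℝ),
      Orthonormal ℝ u ∧ Monotone μ ∧
      (∀ i, (X * Xᵀ).mulVec (u i) = μ i • u i) ∧
      (∀ (m : ℕ) (_ : 1 ≤ m) (hm' : m ≤ n + 1),
        ∀ V : Matrix (Fin (n + 1)) (Fin m) ℝ, Vᵀ * V = 1 →
          frobSq (Xᵀ * Matrix.of (fun i (j : Fin m) => u (Fin.castLE hm' j) i)) ≤
            frobSq (Xᵀ * V)) ∧
      (∀ m : ℕ,
        (Submodule.span ℝ (u '' {i : Fin (n + 1) | (i : ℕ) < m + 1}))ᗮ ≤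
          (Submodule.span ℝ (u '' {i : Fin (n + 1) | (i : ℕ) < m}))ᗮ) ∧
      (∀ m : ℕ,
        {x : EuclideanSpace ℝ (Fin (n + 1)) | ‖x‖ = 1 ∧
            x ∈ (Submodule.span ℝ (u '' {i : Fin (n + 1) | (i : ℕ) < m + 1}))ᗮ} ⊆
          {x : EuclideanSpace ℝ (Fin (n + 1)) | ‖x‖ = 1 ∧
            x ∈ (Submodule.span ℝ (u '' {i : Fin (n + 1) | (i : ℕ) < m}))ᗮ}) := by
  have hT : (toEuclideanLin (X * Xᵀ)).IsSymmetric :=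
    isSymmetric_toEuclideanLin_iff.mpr (by simpa using isHermitian_mul_conjTranspose_self X)
  obtain ⟨b, μ, hμ, hb⟩ :=
    hT.exists_orthonormalBasis_monotone_eigenvalues finrank_euclideanSpace_fin
  have hnest : ∀ m : ℕ, (Submodule.span ℝ (b '' {i | (i : ℕ) < m + 1}))ᗮ ≤
      (Submodule.span ℝ (b '' {i | (i : ℕ) < m}))ᗮ := fun m =>
    Submodule.orthogonal_le (Submodule.span_mono (Set.image_mono fun _ => Nat.lt_succ_of_lt))
  refine ⟨b, μ, b.orthonormal, hμ, fun i => congrArg ofLp (hb i), ?_, hnest,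
    fun m _ hx => ⟨hx.1, hnest m hx.2⟩⟩
  intro m _ hm V hV
  calc frobSq (Xᵀ * of fun i (j : Fin m) => b (Fin.castLE hm j) i)
      = ∑ j : Fin m, μ (Fin.castLE hm j) := by
        rw [frobSq_transpose_mul]
        refine sum_congr rfl fun j _ => ?_
        change ⟪toEuclideanLin (X * Xᵀ) (b _), b _⟫ = _
        rw [hb, real_inner_smul_left, real_inner_self_eq_norm_sq, b.orthonormal.1, one_pow,
          mul_one]
    _ ≤ ∑ j, ⟪toEuclideanLin (X * Xᵀ) (toLp 2 (Vᵀ j)), toLp 2 (Vᵀ j)⟫ :=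
        hT.sum_castLE_eigenvalues_le_sum_inner_apply_self hm b hμ hb
          (orthonormal_toLp_transpose_iff.mpr hV)
    _ = frobSq (Xᵀ * V) := (frobSq_transpose_mul X V).symm
end

section
/- Let k ≤ m ≤ n, let W be a real n×(n−m) matrix with orthonormal columns, and let X be a real n×k matrix with orthonormal columns. Then the infimum, over all real n×k matrices Y with orthonormal columns satisfying Wᵀ Y = 0, of the squared chordal distance k − ‖Xᵀ Y‖_F² equals ‖Xᵀ W‖_F², and this infimum is attained. -/
open scoped Matrix

/-!
Write `x a`, `w j`, `y b` for the columns of `X`, `W`, `Y`, and `P` for the orthogonal projection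
onto `K = (span w)ᗮ`. Then `‖Xᵀ Y‖_F² = ∑ a b, ⟪x a, y b⟫²`, and since every `y b` lies in `K`,
`⟪x a, y b⟫ = ⟪P (x a), y b⟫`. Bessel's inequality bounds this by `∑ a, ‖P (x a)‖²`, which by
Pythagoras is `∑ a, (1 - ∑ j, ⟪w j, x a⟫²) = k - ‖Xᵀ W‖_F²`. Equality holds when the `y b` form an
orthonormal basis of a `k`-dimensional subspace of `K` containing every `P (x a)`; one exists
because `dim K = m ≥ k`.
-/

open scoped RealInnerProductSpace
open Module Submodule Set

namespace Submodule

variable {𝕜 V : Type*} [DivisionRing 𝕜] [AddCommGroup V] [Module 𝕜 V] [FiniteDimensional 𝕜 V]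

theorem exists_le_le_finrank_eq {S T : Submodule 𝕜 V} (hST : S ≤ T) {k : ℕ}
    (hS : finrank 𝕜 S ≤ k) (hT : k ≤ finrank 𝕜 T) :
    ∃ U : Submodule 𝕜 V, S ≤ U ∧ U ≤ T ∧ finrank 𝕜 U = k := by
  induction k with
  | zero => exact ⟨S, le_rfl, hST, by omega⟩
  | succ k ih =>
    rcases hS.eq_or_lt with hS | hS
    · exact ⟨S, le_rfl, hST, hS⟩
    obtain ⟨U, hSU, hUT, hU⟩ := ih (by omega) (by omega)
    obtain ⟨v, hvT, hvU⟩ : ∃ v ∈ T, v ∉ U :=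
      SetLike.exists_of_lt (lt_of_le_of_ne hUT (by rintro rfl; omega))
    exact ⟨U ⊔ span 𝕜 {v}, le_sup_of_le_left hSU,
      sup_le hUT (span_singleton_le_iff_mem _ _ |>.2 hvT),
      by rw [finrank_sup_span_singleton hvU, hU]⟩

end Submodule

section RCLike

variable {𝕜 E : Type*} [RCLike 𝕜] [NormedAddCommGroup E] [InnerProductSpace 𝕜 E]

theorem Submodule.inner_starProjection_eq_of_mem_left (K : Submodule 𝕜 E)
    [K.HasOrthogonalProjection] {y : E} (hy : y ∈ K) (x : E) :
    inner 𝕜 y (K.starProjection x) = inner 𝕜 y x := by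
  rw [← inner_starProjection_left_eq_right, starProjection_eq_self_iff.2 hy]

theorem Submodule.mem_orthogonal_span_range_iff {ι : Type*} (w : ι → E) (v : E) :
    v ∈ (span 𝕜 (range w))ᗮ ↔ ∀ i, inner 𝕜 (w i) v = 0 := by
  rw [span_range_eq_iSup, ← iInf_orthogonal]
  simp [mem_orthogonal_singleton_iff_inner_right]

end RCLike

variable {E : Type*} [NormedAddCommGroup E] [InnerProductSpace ℝ E]

variable {ι κ : Type*} [Fintype ι] [Fintype κ]

theorem Orthonormal.sum_inner_sq_eq_norm_sq_of_mem_span {v : ι → E} (hv : Orthonormal ℝ v)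
    {x : E} (hx : x ∈ span ℝ (range v)) : ∑ i, ⟪v i, x⟫ ^ 2 = ‖x‖ ^ 2 := by
  obtain ⟨c, rfl⟩ := (mem_span_range_iff_exists_fun ℝ).1 hx
  rw [← real_inner_self_eq_norm_sq, hv.inner_sum]
  exact Finset.sum_congr rfl fun i _ ↦ by rw [hv.inner_right_fintype, sq, conj_trivial]

theorem Orthonormal.sum_inner_sq_le_norm_sq_starProjection {v : ι → E} (hv : Orthonormal ℝ v)
    {K : Submodule ℝ E} [K.HasOrthogonalProjection] (hvK : ∀ i, v i ∈ K) (x : E) :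
    ∑ i, ⟪v i, x⟫ ^ 2 ≤ ‖K.starProjection x‖ ^ 2 := by
  calc ∑ i, ⟪v i, x⟫ ^ 2 = ∑ i, ‖⟪v i, K.starProjection x⟫‖ ^ 2 := by
        refine Finset.sum_congr rfl fun i _ ↦ ?_
        rw [K.inner_starProjection_eq_of_mem_left (hvK i), Real.norm_eq_abs, sq_abs]
    _ ≤ ‖K.starProjection x‖ ^ 2 := hv.sum_inner_products_le _

theorem Orthonormal.norm_sq_starProjection_span {v : ι → E} (hv : Orthonormal ℝ v)
    [(span ℝ (range v)).HasOrthogonalProjection] (x : E) :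
    ‖(span ℝ (range v)).starProjection x‖ ^ 2 = ∑ i, ⟪v i, x⟫ ^ 2 := by
  rw [← hv.sum_inner_sq_eq_norm_sq_of_mem_span (starProjection_apply_mem _ x)]
  exact Finset.sum_congr rfl fun i _ ↦ by
    rw [inner_starProjection_eq_of_mem_left _ (subset_span (mem_range_self i))]

theorem Orthonormal.norm_sq_starProjection_orthogonal_span {v : ι → E} (hv : Orthonormal ℝ v)
    [(span ℝ (range v)).HasOrthogonalProjection] (x : E) :
    ‖(span ℝ (range v))ᗮ.starProjection x‖ ^ 2 = ‖x‖ ^ 2 - ∑ i, ⟪v i, x⟫ ^ 2 := by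
  rw [norm_sq_eq_add_norm_sq_starProjection x (span ℝ (range v)),
    hv.norm_sq_starProjection_span, add_sub_cancel_left]

theorem Orthonormal.finrank_orthogonal_span [FiniteDimensional ℝ E] {v : ι → E}
    (hv : Orthonormal ℝ v) : finrank ℝ (span ℝ (range v))ᗮ = finrank ℝ E - Fintype.card ι := by
  rw [← finrank_span_eq_card hv.linearIndependent,
    ← (span ℝ (range v)).finrank_add_finrank_orthogonal, Nat.add_sub_cancel_left]

theorem exists_orthonormal_mem_le_span [FiniteDimensional ℝ E] {S K : Submodule ℝ E}
    (hSK : S ≤ K) (hS : finrank ℝ S ≤ Fintype.card κ) (hK : Fintype.card κ ≤ finrank ℝ K) :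
    ∃ y : κ → E, Orthonormal ℝ y ∧ (∀ j, y j ∈ K) ∧ S ≤ span ℝ (range y) := by
  obtain ⟨U, hSU, hUK, hU⟩ := exists_le_le_finrank_eq hSK hS hK
  let b := (stdOrthonormalBasis ℝ U).reindex (Fintype.equivFinOfCardEq hU.symm).symm
  refine ⟨fun j ↦ (b j : E), b.orthonormal.comp_linearIsometry U.subtypeₗᵢ,
    fun j ↦ hUK (b j).2, hSU.trans_eq ?_⟩
  have hb : span ℝ (range b) = ⊤ := b.toBasis.span_eq
  rw [range_comp', ← U.coe_subtype, span_image, hb, map_subtype_top]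

theorem isGreatest_sum_sq_inner_orthonormal_mem [FiniteDimensional ℝ E] (K : Submodule ℝ E)
    (x : ι → E) (hικ : Fintype.card ι ≤ Fintype.card κ) (hκK : Fintype.card κ ≤ finrank ℝ K) :
    IsGreatest {r | ∃ y : κ → E, Orthonormal ℝ y ∧ (∀ j, y j ∈ K) ∧
        r = ∑ i, ∑ j, ⟪x i, y j⟫ ^ 2}
      (∑ i, ‖K.starProjection (x i)‖ ^ 2) := by
  constructor
  · obtain ⟨y, hy, hyK, hspan⟩ := exists_orthonormal_mem_le_span
      (span_le.2 (range_subset_iff.2 fun i ↦ K.starProjection_apply_mem (x i)))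
      ((finrank_range_le_card _).trans hικ) hκK
    refine ⟨y, hy, hyK, Finset.sum_congr rfl fun i _ ↦ ?_⟩
    rw [← hy.sum_inner_sq_eq_norm_sq_of_mem_span (hspan (subset_span (mem_range_self i)))]
    exact Finset.sum_congr rfl fun j _ ↦ by
      rw [K.inner_starProjection_eq_of_mem_left (hyK j), real_inner_comm]
  · rintro _ ⟨y, hy, hyK, rfl⟩
    refine Finset.sum_le_sum fun i _ ↦ ?_
    simpa only [real_inner_comm] using hy.sum_inner_sq_le_norm_sq_starProjection hyK (x i)

namespace Matrix

variable {m ι κ : Type*}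

def euclideanCol (A : Matrix m ι ℝ) (j : ι) : EuclideanSpace ℝ m :=
  WithLp.toLp 2 fun i ↦ A i j

def ofEuclideanCols (y : ι → EuclideanSpace ℝ m) : Matrix m ι ℝ :=
  of fun i j ↦ y j i

@[simp]
theorem euclideanCol_ofEuclideanCols (y : ι → EuclideanSpace ℝ m) :
    (ofEuclideanCols y).euclideanCol = y :=
  rfl

variable [Fintype m]

theorem transpose_mul_apply_eq_inner (A : Matrix m ι ℝ) (B : Matrix m κ ℝ) (i : ι) (j : κ) :
    (Aᵀ * B) i j = ⟪A.euclideanCol i, B.euclideanCol j⟫ := by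
  simp [euclideanCol, mul_apply, EuclideanSpace.inner_toLp_toLp, dotProduct, mul_comm]

theorem transpose_mul_self_eq_one_iff [DecidableEq ι] (A : Matrix m ι ℝ) :
    Aᵀ * A = 1 ↔ Orthonormal ℝ A.euclideanCol := by
  simp only [orthonormal_iff_ite, ← Matrix.ext_iff, transpose_mul_apply_eq_inner, one_apply]

theorem transpose_mul_eq_zero_iff (A : Matrix m ι ℝ) (B : Matrix m κ ℝ) :
    Aᵀ * B = 0 ↔ ∀ j, B.euclideanCol j ∈ (span ℝ (range A.euclideanCol))ᗮ := by
  simp only [mem_orthogonal_span_range_iff, ← Matrix.ext_iff, transpose_mul_apply_eq_inner,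
    zero_apply]
  exact forall_comm

theorem frobSq_transpose_mul_s5 [Fintype ι] [Fintype κ] (A : Matrix m ι ℝ) (B : Matrix m κ ℝ) :
    frobSq (Aᵀ * B) = ∑ i, ∑ j, ⟪A.euclideanCol i, B.euclideanCol j⟫ ^ 2 := by
  simp only [frobSq, transpose_mul_apply_eq_inner]

end Matrix

open Matrix in
/-- The squared chordal distance `k − ‖Xᵀ Y‖_F²` from a `k`-plane `X` to the
totally geodesic submanifold `G(k,m)` of `k`-planes orthogonal to `W` has
least value `‖Xᵀ W‖_F²`, and this value is attained. -/
theorem chordal_dist_to_grassmann_submanifold (n m k : ℕ) (hk : k ≤ m) (hm : m ≤ n)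
    (W : Matrix (Fin n) (Fin (n - m)) ℝ) (hW : Wᵀ * W = 1)
    (X : Matrix (Fin n) (Fin k) ℝ) (hX : Xᵀ * X = 1) :
    IsLeast {r : ℝ | ∃ Y : Matrix (Fin n) (Fin k) ℝ,
        Yᵀ * Y = 1 ∧ Wᵀ * Y = 0 ∧ r = (k : ℝ) - frobSq (Xᵀ * Y)}
      (frobSq (Xᵀ * W)) := by
  have hWon := (transpose_mul_self_eq_one_iff W).1 hW
  have hXon := (transpose_mul_self_eq_one_iff X).1 hX
  have hkK : Fintype.card (Fin k) ≤ finrank ℝ (span ℝ (range W.euclideanCol))ᗮ := by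
    rw [hWon.finrank_orthogonal_span, finrank_euclideanSpace_fin, Fintype.card_fin,
      Fintype.card_fin]
    omega
  have hproj : ∑ a, ‖(span ℝ (range W.euclideanCol))ᗮ.starProjection (X.euclideanCol a)‖ ^ 2
      = k - frobSq (Xᵀ * W) := by
    simp only [hWon.norm_sq_starProjection_orthogonal_span, hXon.1, one_pow,
      Finset.sum_sub_distrib, frobSq_transpose_mul_s5]
    simp [real_inner_comm]
  obtain ⟨⟨y, hy, hyK, hy_eq⟩, hbound⟩ :=
    isGreatest_sum_sq_inner_orthonormal_mem _ X.euclideanCol le_rfl hkK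
  refine ⟨⟨ofEuclideanCols y, (transpose_mul_self_eq_one_iff _).2 hy,
    (transpose_mul_eq_zero_iff _ _).2 hyK, ?_⟩, ?_⟩
  · rw [frobSq_transpose_mul_s5 X (ofEuclideanCols y), euclideanCol_ofEuclideanCols, ← hy_eq, hproj]
    ring
  · rintro _ ⟨Y, hY, hWY, rfl⟩
    have := hbound ⟨Y.euclideanCol, (transpose_mul_self_eq_one_iff Y).1 hY,
      (transpose_mul_eq_zero_iff W Y).1 hWY, frobSq_transpose_mul_s5 X Y⟩
    linarith
end

section
/- Let k ≤ n and let A ∈ ℤ^{k×n} be a unimodular integer matrix (the gcd of its k×k minors equals 1). Let π_n : ℝ^n → ℝ^n/ℤ^n and π_k : ℝ^k → ℝ^k/ℤ^k denote the quotient maps, and let Ā : ℝ^n/ℤ^n → ℝ^k/ℤ^k be the group homomorphism induced by x ↦ A x (well defined since A ℤ^n ⊆ ℤ^k). Then for every c ∈ ℝ^k the set T = {x ∈ ℝ^n/ℤ^n : Ā(x) = π_k(c)} is nonempty and connected. -/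
open scoped Matrix

lemma exists_right_inverse (k n : ℕ)
    (A : Matrix (Fin k) (Fin n) ℤ)
    (hA : Finset.univ.gcd
        (fun s : Fin k ↪ Fin n => (A.submatrix id s).det) = 1) :
    ∃ B : Matrix (Fin n) (Fin k) ℤ, A * B = 1 := by
  set R : Submodule ℤ (Fin k → ℤ) := LinearMap.range A.mulVecLin with hR
  have hminor : ∀ (s : Fin k ↪ Fin n) (v : Fin k → ℤ),
      (A.submatrix id s).det • v ∈ R := by
    intro s v
    set M := A.submatrix id s with hM
    set u : Fin k → ℤ := M.adjugate.mulVec v with hu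
    refine ⟨fun t => ∑ j : Fin k, if t = s j then u j else 0, ?_⟩
    have h1 : A.mulVec (fun t => ∑ j : Fin k, if t = s j then u j else 0)
        = M.mulVec u := by
      funext i
      simp only [Matrix.mulVec, dotProduct, Finset.mul_sum]
      rw [Finset.sum_comm]
      refine Finset.sum_congr rfl fun j _ => ?_
      rw [Finset.sum_eq_single (s j)]
      · simp [hM, Matrix.submatrix_apply]
      · intro b _ hb; simp [hb]
      · simp
    rw [Matrix.mulVecLin_apply, h1, hu, Matrix.mulVec_mulVec, Matrix.mul_adjugate,
      Matrix.smul_mulVec, Matrix.one_mulVec]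
  have hall : ∀ v : Fin k → ℤ, v ∈ R := by
    intro v
    set I : Ideal ℤ := Submodule.comap (LinearMap.toSpanSingleton ℤ _ v) R with hI
    have hmem : ∀ s : Fin k ↪ Fin n, (A.submatrix id s).det ∈ I := fun s => hminor s v
    obtain ⟨g, hg⟩ := (inferInstance : I.IsPrincipal)
    have hdvd : g ∣ Finset.univ.gcd (fun s : Fin k ↪ Fin n => (A.submatrix id s).det) := by
      refine Finset.dvd_gcd fun s _ => ?_
      have := hmem s
      rw [hg, Submodule.mem_span_singleton] at this
      obtain ⟨a, ha⟩ := this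
      exact Dvd.intro_left a ha
    rw [hA] at hdvd
    have h1 : (1 : ℤ) ∈ I := by
      rw [hg, Submodule.mem_span_singleton]
      obtain ⟨a, ha⟩ := (isUnit_of_dvd_one hdvd).dvd
      exact ⟨a, by rw [smul_eq_mul, mul_comm, ← ha]⟩
    have h2 := Submodule.mem_comap.mp h1
    simpa [LinearMap.toSpanSingleton_apply] using h2
  have hsurj : ∀ i : Fin k, ∃ b : Fin n → ℤ, A.mulVec b = Pi.single i 1 := by
    intro i
    obtain ⟨b, hb⟩ := hall (Pi.single i 1)
    exact ⟨b, hb⟩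
  choose b hb using hsurj
  refine ⟨Matrix.of fun j i => b i j, ?_⟩
  ext i i'
  have := congrFun (hb i') i
  simp only [Matrix.mulVec, dotProduct] at this
  simp only [Matrix.mul_apply, Matrix.of_apply]
  rw [this, Pi.single_apply, Matrix.one_apply]


/-- For a unimodular integer matrix `A ∈ ℤ^{k×n}` (gcd of `k×k` minors is `1`) and
any `c ∈ ℝᵏ`, the subtorus `T = {x ∈ ℝⁿ/ℤⁿ : Ā x = π c}` determined by the
resonance relations `A x = c` is nonempty and connected. Here `ℝⁿ/ℤⁿ` is modelled
as `Fin n → AddCircle 1`, and the induced map `Ā` sends `x` to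
`fun i => Σⱼ A i j • x j`. -/
theorem subtorus_nonempty_connected (k n : ℕ) (hkn : k ≤ n)
    (A : Matrix (Fin k) (Fin n) ℤ)
    (hA : Finset.univ.gcd
        (fun s : Fin k ↪ Fin n => (A.submatrix id s).det) = 1)
    (c : Fin k → ℝ) :
    ({x : Fin n → AddCircle (1 : ℝ) |
        ∀ i, ∑ j, A i j • x j = ((c i : AddCircle (1 : ℝ)))}).Nonempty ∧
    IsConnected {x : Fin n → AddCircle (1 : ℝ) |
        ∀ i, ∑ j, A i j • x j = ((c i : AddCircle (1 : ℝ)))} := by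
  obtain ⟨B, hB⟩ := exists_right_inverse k n A hA
  set Ar : Matrix (Fin k) (Fin n) ℝ := A.map (Int.cast) with hAr
  set Br : Matrix (Fin n) (Fin k) ℝ := B.map (Int.cast) with hBr
  have hABr : Ar * Br = 1 := by
    ext i i'
    have h := congrFun (congrFun hB i) i'
    simp only [Matrix.mul_apply, Matrix.one_apply, hAr, hBr, Matrix.map_apply] at h ⊢
    exact_mod_cast h
  -- the quotient map
  set p : (Fin n → ℝ) → (Fin n → AddCircle (1 : ℝ)) := fun w j => (w j : AddCircle (1 : ℝ))
    with hp
  have hpc : Continuous p :=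
    continuous_pi fun j => (AddCircle.continuous_mk' 1).comp (continuous_apply j)
  -- the affine solution set
  set S : Set (Fin n → ℝ) := {w | Ar.mulVec w = c} with hS
  -- S is nonempty
  have hSne : S.Nonempty := by
    refine ⟨Br.mulVec c, ?_⟩
    show Ar.mulVec (Br.mulVec c) = c
    rw [Matrix.mulVec_mulVec, hABr, Matrix.one_mulVec]
  -- S is convex
  have hSconv : Convex ℝ S := by
    have : S = Ar.mulVecLin ⁻¹' {c} := by
      ext w; simp [hS, Matrix.mulVecLin_apply]
    rw [this]
    exact (convex_singleton c).linear_preimage _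
  -- the coercion as an AddMonoidHom
  set φ : ℝ →+ AddCircle (1 : ℝ) :=
    QuotientAddGroup.mk' (AddSubgroup.zmultiples (1 : ℝ)) with hφ
  have hφ_apply : ∀ r : ℝ, φ r = (r : AddCircle (1 : ℝ)) := fun r => rfl
  have hint : ∀ z : ℤ, ((z : ℝ) : AddCircle (1 : ℝ)) = 0 := by
    intro z
    rw [AddCircle.coe_eq_zero_iff]
    exact ⟨z, by simp⟩
  -- key: the set equals p '' S
  have hTS : {x : Fin n → AddCircle (1 : ℝ) |
      ∀ i, ∑ j, A i j • x j = ((c i : AddCircle (1 : ℝ)))} = p '' S := by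
    ext x
    constructor
    · intro hx
      choose w hw using fun j => QuotientAddGroup.mk_surjective (x j)
      have hsum : ∀ i, ∃ m : ℤ, (m : ℝ) = (∑ j, (A i j : ℝ) * w j) - c i := by
        intro i
        have h1 : ((∑ j, (A i j : ℝ) * w j : ℝ) : AddCircle (1 : ℝ))
            = ((c i : ℝ) : AddCircle (1 : ℝ)) := by
          calc ((∑ j, (A i j : ℝ) * w j : ℝ) : AddCircle (1 : ℝ))
              = ∑ j, A i j • x j := by
                rw [← hφ_apply, map_sum]
                refine Finset.sum_congr rfl fun j _ => ?_
                rw [← hw j]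
                rw [show ((A i j : ℝ) * w j) = (A i j) • (w j) by
                  rw [zsmul_eq_mul]]
                rw [map_zsmul, hφ_apply]
            _ = ((c i : ℝ) : AddCircle (1 : ℝ)) := hx i
        rw [QuotientAddGroup.eq_iff_sub_mem] at h1
        obtain ⟨m, hm⟩ := AddSubgroup.mem_zmultiples_iff.mp h1
        exact ⟨m, by rw [← hm]; simp⟩
      choose m hm using hsum
      refine ⟨w - fun j => ((B.mulVec m) j : ℝ), ?_, ?_⟩
      · show Ar.mulVec _ = c
        have hg : Ar.mulVec (fun j => ((B.mulVec m) j : ℝ)) = fun i' => (m i' : ℝ) := by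
          funext i'
          have hAB : (A.mulVec (B.mulVec m)) = m := by
            rw [Matrix.mulVec_mulVec, hB, Matrix.one_mulVec]
          have h3 := congrFun hAB i'
          simp only [Matrix.mulVec, dotProduct, hAr, Matrix.map_apply] at h3 ⊢
          exact_mod_cast h3
        rw [Matrix.mulVec_sub, hg]
        funext i
        simp only [Pi.sub_apply]
        have hw2 : (Ar.mulVec w) i = ∑ j, (A i j : ℝ) * w j := by
          simp [Matrix.mulVec, dotProduct, hAr]
        rw [hw2]
        have := hm i
        linarith
      · funext j
        show ((w j - ((B.mulVec m) j : ℝ) : ℝ) : AddCircle (1 : ℝ)) = x j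
        rw [← hφ_apply, map_sub, hφ_apply, hφ_apply, hint, sub_zero, hw]
    · rintro ⟨w, hwS, rfl⟩
      intro i
      have h1 : ∀ j, (A i j) • (p w j) = φ ((A i j : ℝ) * w j) := by
        intro j
        rw [show ((A i j : ℝ) * w j) = (A i j) • (w j) by
          rw [zsmul_eq_mul]]
        rw [map_zsmul]
        rfl
      rw [Finset.sum_congr rfl fun j _ => h1 j, ← map_sum]
      have : ∑ j, (A i j : ℝ) * w j = c i := by
        have := congrFun hwS i
        simpa [Matrix.mulVec, dotProduct, hAr] using this
      rw [this, hφ_apply]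
  rw [hTS]
  have hconn : IsConnected S := hSconv.isConnected hSne
  exact ⟨hSne.image p, hconn.image p hpc.continuousOn⟩
end

section
/- Let V be a 2-dimensional linear subspace of ℝ² × ℝ². Then at least one of the following holds: (i) there exists a linear map B : ℝ² → ℝ² such that V = {(ξ, B ξ) : ξ ∈ ℝ²}; (ii) there exists a linear map B : ℝ² → ℝ² such that V = {(B η, η) : η ∈ ℝ²}; (iii) there exist vectors ζ_1, ζ_2 ∈ ℝ² such that V = {(t_1 ζ_1, t_2 ζ_2) : t_1, t_2 ∈ ℝ}. -/
/-- Every 2-dimensional subspace of `ℝ² × ℝ²` is of the form `{(ξ, B ξ)}`,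
`{(B η, η)}`, or `{(t₁ ζ₁, t₂ ζ₂)}`. -/
theorem two_dim_subspace_classification
    (V : Submodule ℝ ((Fin 2 → ℝ) × (Fin 2 → ℝ)))
    (hV : Module.finrank ℝ V = 2) :
    (∃ B : (Fin 2 → ℝ) →ₗ[ℝ] (Fin 2 → ℝ),
        (V : Set ((Fin 2 → ℝ) × (Fin 2 → ℝ))) = {p | ∃ ξ, p = (ξ, B ξ)}) ∨
    (∃ B : (Fin 2 → ℝ) →ₗ[ℝ] (Fin 2 → ℝ),
        (V : Set ((Fin 2 → ℝ) × (Fin 2 → ℝ))) = {p | ∃ η, p = (B η, η)}) ∨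
    (∃ ζ₁ ζ₂ : Fin 2 → ℝ,
        (V : Set ((Fin 2 → ℝ) × (Fin 2 → ℝ))) =
          {p | ∃ t₁ t₂ : ℝ, p = (t₁ • ζ₁, t₂ • ζ₂)}) := by
  classical
  set f : V →ₗ[ℝ] (Fin 2 → ℝ) := (LinearMap.fst ℝ _ _).comp V.subtype with hfdef
  set g : V →ₗ[ℝ] (Fin 2 → ℝ) := (LinearMap.snd ℝ _ _).comp V.subtype with hgdef
  have hrk : Module.finrank ℝ V = Module.finrank ℝ (Fin 2 → ℝ) := by
    simp [hV]
  by_cases hf : Function.Injective f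
  · left
    have hsurj : Function.Surjective f :=
      (LinearMap.injective_iff_surjective_of_finrank_eq_finrank hrk).mp hf
    let e : V ≃ₗ[ℝ] (Fin 2 → ℝ) := LinearEquiv.ofBijective f ⟨hf, hsurj⟩
    refine ⟨g.comp (e.symm : (Fin 2 → ℝ) →ₗ[ℝ] V), ?_⟩
    ext p
    constructor
    · intro hp
      refine ⟨p.1, ?_⟩
      have he : e ⟨p, hp⟩ = p.1 := rfl
      have hsy : e.symm p.1 = ⟨p, hp⟩ := by
        rw [← he, e.symm_apply_apply]
      simp only [Set.mem_setOf_eq, LinearMap.comp_apply, LinearEquiv.coe_coe, hsy]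
      exact Prod.ext rfl rfl
    · rintro ⟨ξ, rfl⟩
      have hmem : ((e.symm ξ : V) : (Fin 2 → ℝ) × (Fin 2 → ℝ)) ∈ V := (e.symm ξ).2
      have h1 : ((e.symm ξ : V) : (Fin 2 → ℝ) × (Fin 2 → ℝ)).1 = ξ := by
        have : f (e.symm ξ) = ξ := e.apply_symm_apply ξ
        exact this
      have h2 : ((e.symm ξ : V) : (Fin 2 → ℝ) × (Fin 2 → ℝ)).2
          = g.comp (e.symm : (Fin 2 → ℝ) →ₗ[ℝ] V) ξ := rfl
      have heq : (ξ, g.comp (e.symm : (Fin 2 → ℝ) →ₗ[ℝ] V) ξ)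
          = ((e.symm ξ : V) : (Fin 2 → ℝ) × (Fin 2 → ℝ)) :=
        Prod.ext h1.symm h2.symm
      rw [SetLike.mem_coe, heq]
      exact hmem
  · by_cases hg : Function.Injective g
    · right; left
      have hsurj : Function.Surjective g :=
        (LinearMap.injective_iff_surjective_of_finrank_eq_finrank hrk).mp hg
      let e : V ≃ₗ[ℝ] (Fin 2 → ℝ) := LinearEquiv.ofBijective g ⟨hg, hsurj⟩
      refine ⟨f.comp (e.symm : (Fin 2 → ℝ) →ₗ[ℝ] V), ?_⟩
      ext p
      constructor
      · intro hp
        refine ⟨p.2, ?_⟩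
        have he : e ⟨p, hp⟩ = p.2 := rfl
        have hsy : e.symm p.2 = ⟨p, hp⟩ := by
          rw [← he, e.symm_apply_apply]
        simp only [Set.mem_setOf_eq, LinearMap.comp_apply, LinearEquiv.coe_coe, hsy]
        exact Prod.ext rfl rfl
      · rintro ⟨η, rfl⟩
        have hmem : ((e.symm η : V) : (Fin 2 → ℝ) × (Fin 2 → ℝ)) ∈ V := (e.symm η).2
        have h2 : ((e.symm η : V) : (Fin 2 → ℝ) × (Fin 2 → ℝ)).2 = η := by
          have : g (e.symm η) = η := e.apply_symm_apply η
          exact this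
        have h1 : ((e.symm η : V) : (Fin 2 → ℝ) × (Fin 2 → ℝ)).1
            = f.comp (e.symm : (Fin 2 → ℝ) →ₗ[ℝ] V) η := rfl
        have heq : (f.comp (e.symm : (Fin 2 → ℝ) →ₗ[ℝ] V) η, η)
            = ((e.symm η : V) : (Fin 2 → ℝ) × (Fin 2 → ℝ)) :=
          Prod.ext h1.symm h2.symm
        rw [SetLike.mem_coe, heq]
        exact hmem
    · right; right
      -- get nonzero elements of the kernels
      have hfk : ∃ v : V, v ≠ 0 ∧ f v = 0 := by
        rw [← LinearMap.ker_eq_bot] at hf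
        obtain ⟨v, hv, hv0⟩ := Submodule.exists_mem_ne_zero_of_ne_bot hf
        exact ⟨v, hv0, hv⟩
      have hgk : ∃ w : V, w ≠ 0 ∧ g w = 0 := by
        rw [← LinearMap.ker_eq_bot] at hg
        obtain ⟨w, hw, hw0⟩ := Submodule.exists_mem_ne_zero_of_ne_bot hg
        exact ⟨w, hw0, hw⟩
      obtain ⟨v, hv0, hv1⟩ := hfk
      obtain ⟨w, hw0, hw1⟩ := hgk
      -- v = (0, v.2) with v.2 ≠ 0; w = (w.1, 0) with w.1 ≠ 0
      have hv1' : (v : (Fin 2 → ℝ) × (Fin 2 → ℝ)).1 = 0 := hv1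
      have hw1' : (w : (Fin 2 → ℝ) × (Fin 2 → ℝ)).2 = 0 := hw1
      have hv2 : (v : (Fin 2 → ℝ) × (Fin 2 → ℝ)).2 ≠ 0 := by
        intro h
        apply hv0
        apply Subtype.ext
        exact Prod.ext hv1' h
      have hw2 : (w : (Fin 2 → ℝ) × (Fin 2 → ℝ)).1 ≠ 0 := by
        intro h
        apply hw0
        apply Subtype.ext
        exact Prod.ext h hw1'
      refine ⟨(w : (Fin 2 → ℝ) × (Fin 2 → ℝ)).1, (v : (Fin 2 → ℝ) × (Fin 2 → ℝ)).2, ?_⟩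
      -- linear independence of w.val, v.val
      have hli : LinearIndependent ℝ ![(w : (Fin 2 → ℝ) × (Fin 2 → ℝ)),
          (v : (Fin 2 → ℝ) × (Fin 2 → ℝ))] := by
        rw [LinearIndependent.pair_iff]
        intro s t hst
        have h1 := congrArg Prod.fst hst
        have h2 := congrArg Prod.snd hst
        simp only [Prod.fst_add, Prod.smul_fst, Prod.snd_add, Prod.smul_snd, hv1', hw1',
          smul_zero, add_zero, zero_add, Prod.fst_zero, Prod.snd_zero] at h1 h2
        constructor
        · rcases smul_eq_zero.mp h1 with h | h
          · exact h
          · exact absurd h hw2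
        · rcases smul_eq_zero.mp h2 with h | h
          · exact h
          · exact absurd h hv2
      have hrange : Set.range ![(w : (Fin 2 → ℝ) × (Fin 2 → ℝ)),
          (v : (Fin 2 → ℝ) × (Fin 2 → ℝ))]
          = {(w : (Fin 2 → ℝ) × (Fin 2 → ℝ)), (v : (Fin 2 → ℝ) × (Fin 2 → ℝ))} := by
        simp only [Matrix.range_cons, Matrix.range_empty, Set.union_empty,
          Set.union_singleton]
        exact Set.pair_comm _ _
      have hWle : Submodule.span ℝ
          ({(w : (Fin 2 → ℝ) × (Fin 2 → ℝ)), (v : (Fin 2 → ℝ) × (Fin 2 → ℝ))} :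
            Set ((Fin 2 → ℝ) × (Fin 2 → ℝ))) ≤ V := by
        rw [Submodule.span_le]
        rintro x (rfl | rfl)
        · exact w.2
        · exact v.2
      have hWrk : Module.finrank ℝ (Submodule.span ℝ
          ({(w : (Fin 2 → ℝ) × (Fin 2 → ℝ)), (v : (Fin 2 → ℝ) × (Fin 2 → ℝ))} :
            Set ((Fin 2 → ℝ) × (Fin 2 → ℝ)))) = 2 := by
        rw [← hrange]
        rw [finrank_span_eq_card hli]
        simp
      have hWV : Submodule.span ℝ
          ({(w : (Fin 2 → ℝ) × (Fin 2 → ℝ)), (v : (Fin 2 → ℝ) × (Fin 2 → ℝ))} :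
            Set ((Fin 2 → ℝ) × (Fin 2 → ℝ))) = V :=
        Submodule.eq_of_le_of_finrank_eq hWle (by rw [hWrk, hV])
      ext p
      constructor
      · intro hp
        rw [SetLike.mem_coe, ← hWV, Submodule.mem_span_pair] at hp
        obtain ⟨a, b, hab⟩ := hp
        refine ⟨a, b, ?_⟩
        rw [← hab]
        apply Prod.ext
        · simp [hv1']
        · simp [hw1']
      · rintro ⟨t₁, t₂, rfl⟩
        have hmem : (t₁ • (w : (Fin 2 → ℝ) × (Fin 2 → ℝ)).1,
            t₂ • (v : (Fin 2 → ℝ) × (Fin 2 → ℝ)).2) ∈ Submodule.span ℝ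
            ({(w : (Fin 2 → ℝ) × (Fin 2 → ℝ)), (v : (Fin 2 → ℝ) × (Fin 2 → ℝ))} :
              Set ((Fin 2 → ℝ) × (Fin 2 → ℝ))) := by
          rw [Submodule.mem_span_pair]
          refine ⟨t₁, t₂, ?_⟩
          apply Prod.ext
          · simp [hv1']
          · simp [hw1']
        exact hWle hmem
end

section
/- Let A be a nonzero antisymmetric real 2×2 matrix and let B be a real 2×2 matrix such that B A Bᵀ B z = B A z for all z ∈ ℝ² (equivalently B A Bᵀ B = B A). Then either Bᵀ B = I_2 (so B is orthogonal) or B = 0. -/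
open scoped Matrix

/-- If `A` is a nonzero antisymmetric real 2×2 matrix and `B A Bᵀ B = B A`,
then `B` is orthogonal or zero. -/
theorem orthogonal_or_zero (A B : Matrix (Fin 2) (Fin 2) ℝ)
    (hA : Aᵀ = -A) (hA0 : A ≠ 0)
    (h : B * A * Bᵀ * B = B * A) :
    Bᵀ * B = 1 ∨ B = 0 := by
  have hAe : ∀ i j, A j i = -A i j := by
    intro i j
    have := congrFun (congrFun hA i) j
    simpa [Matrix.transpose_apply] using this
  have h00 : A 0 0 = 0 := by have := hAe 0 0; linarith
  have h11 : A 1 1 = 0 := by have := hAe 1 1; linarith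
  have h10 : A 1 0 = -A 0 1 := hAe 0 1
  have ha : A 0 1 ≠ 0 := by
    intro ha
    apply hA0
    have h10' : A 1 0 = 0 := by rw [h10, ha, neg_zero]
    ext i j
    fin_cases i <;> fin_cases j <;>
      simp only [Matrix.zero_apply, Fin.mk_zero, Fin.mk_one] <;>
      assumption
  have hAdet : A.det ≠ 0 := by
    rw [Matrix.det_fin_two, h00, h11, h10]
    intro hcon
    exact ha (by nlinarith [sq_nonneg (A 0 1)])
  have hAu : IsUnit A.det := isUnit_iff_ne_zero.mpr hAdet
  by_cases hBdet : B.det = 0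
  · right
    set M := B * A * Bᵀ with hM
    have hMt : Mᵀ = -M := by
      rw [hM, Matrix.transpose_mul, Matrix.transpose_mul, Matrix.transpose_transpose,
        hA, Matrix.neg_mul, Matrix.mul_neg, Matrix.mul_assoc]
    have hMe : ∀ i j, M j i = -M i j := by
      intro i j
      have := congrFun (congrFun hMt i) j
      simpa [Matrix.transpose_apply] using this
    have hM00 : M 0 0 = 0 := by have := hMe 0 0; linarith
    have hM11 : M 1 1 = 0 := by have := hMe 1 1; linarith
    have hM10 : M 1 0 = -M 0 1 := hMe 0 1
    have hMdet : M.det = 0 := by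
      rw [hM, Matrix.det_mul, Matrix.det_mul, hBdet]
      ring
    have hM01 : M 0 1 = 0 := by
      rw [Matrix.det_fin_two, hM00, hM11, hM10] at hMdet
      nlinarith [sq_nonneg (M 0 1)]
    have hM10' : M 1 0 = 0 := by rw [hM10, hM01, neg_zero]
    have hMzero : M = 0 := by
      ext i j
      fin_cases i <;> fin_cases j <;>
        simp only [Matrix.zero_apply, Fin.mk_zero, Fin.mk_one] <;>
        assumption
    have hBA : B * A = 0 := by
      rw [hMzero, Matrix.zero_mul] at h
      exact h.symm
    have : B * A * A⁻¹ = 0 * A⁻¹ := by rw [hBA]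
    rwa [Matrix.mul_nonsing_inv_cancel_right _ _ hAu, Matrix.zero_mul] at this
  · left
    have hBu : IsUnit B.det := isUnit_iff_ne_zero.mpr hBdet
    have h1 : B⁻¹ * (B * A * Bᵀ * B) = B⁻¹ * (B * A) := by rw [h]
    rw [show B * A * Bᵀ * B = B * (A * (Bᵀ * B)) by
        simp only [Matrix.mul_assoc],
      Matrix.nonsing_inv_mul_cancel_left _ _ hBu,
      Matrix.nonsing_inv_mul_cancel_left _ _ hBu] at h1
    have h2 : A⁻¹ * (A * (Bᵀ * B)) = A⁻¹ * A := by rw [h1]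
    rwa [Matrix.nonsing_inv_mul_cancel_left _ _ hAu,
      Matrix.nonsing_inv_mul _ hAu] at h2
end

section
/- For ξ ∈ ℝ², let m(ξ) denote the 3×3 skew-symmetric matrix with blocks m(ξ) = [[0_{2×2}, ξ], [−ξᵀ, 0]], and define [[ξ,ζ]] := ζ ξᵀ − ξ ζᵀ. Let B be any real 2×2 matrix. Then for all x, y, z ∈ ℝ², working in the product Lie algebra of pairs of 3×3 matrices with componentwise commutator, [[(m(x), m(Bx)), (m(y), m(By))], (m(z), m(Bz))] = (m([[x,y]] z), m(B [[x,y]] Bᵀ B z)). In particular, [[Bx, By]] = B [[x,y]] Bᵀ. -/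
open scoped Matrix

/-- The matrix `m(ξ) = [[0, ξ], [−ξᵀ, 0]] ∈ 𝔬(3)` for `ξ ∈ ℝ²`, with index type
`Fin 2 ⊕ Unit`. -/
def mS (ξ : Fin 2 → ℝ) : Matrix (Fin 2 ⊕ Unit) (Fin 2 ⊕ Unit) ℝ :=
  Matrix.fromBlocks 0 (Matrix.of fun i (_ : Unit) => ξ i)
    (Matrix.of fun (_ : Unit) j => -ξ j) 0

/-- The antisymmetric 2×2 matrix `[[ξ,ζ]] = ζ ξᵀ − ξ ζᵀ`. -/
def bb (ξ ζ : Fin 2 → ℝ) : Matrix (Fin 2) (Fin 2) ℝ :=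
  Matrix.vecMulVec ζ ξ - Matrix.vecMulVec ξ ζ

lemma triple (a b c : Fin 2 → ℝ) :
    ⁅⁅mS a, mS b⁆, mS c⁆ = mS ((bb a b).mulVec c) := by
  ext i j
  simp only [Ring.lie_def, mS, bb, Matrix.sub_apply, Matrix.mul_apply,
    Matrix.mulVec, dotProduct, Fintype.sum_sum_type, Fin.sum_univ_two,
    Finset.univ_unique, Finset.sum_singleton, Matrix.fromBlocks_apply₁₁,
    Matrix.fromBlocks_apply₁₂, Matrix.fromBlocks_apply₂₁, Matrix.fromBlocks_apply₂₂,
    Matrix.of_apply, Matrix.zero_apply, Matrix.vecMulVec_apply]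
  rcases i with i | i <;> rcases j with j | j <;>
    fin_cases i <;> fin_cases j <;> simp <;> ring

lemma bbB (B : Matrix (Fin 2) (Fin 2) ℝ) (p q : Fin 2 → ℝ) :
    bb (B.mulVec p) (B.mulVec q) = B * bb p q * Bᵀ := by
  ext i j
  simp only [bb, Matrix.sub_apply, Matrix.mul_apply, Matrix.mulVec, dotProduct,
    Fin.sum_univ_two, Matrix.vecMulVec_apply, Matrix.transpose_apply]
  ring

/-- In the product Lie algebra of pairs of 3×3 matrices (componentwise commutator),
`[[(m x, m (Bx)), (m y, m (By))], (m z, m (Bz))] = (m ([[x,y]] z), m (B [[x,y]] Bᵀ B z))`;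
in particular `[[Bx, By]] = B [[x,y]] Bᵀ`. -/
theorem polysphere_pair_triple_bracket (B : Matrix (Fin 2) (Fin 2) ℝ)
    (x y z : Fin 2 → ℝ) :
    ((⁅⁅mS x, mS y⁆, mS z⁆, ⁅⁅mS (B.mulVec x), mS (B.mulVec y)⁆, mS (B.mulVec z)⁆) :
        Matrix (Fin 2 ⊕ Unit) (Fin 2 ⊕ Unit) ℝ × Matrix (Fin 2 ⊕ Unit) (Fin 2 ⊕ Unit) ℝ) =
      (mS ((bb x y).mulVec z), mS ((B * bb x y * Bᵀ * B).mulVec z)) ∧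
    (∀ p q : Fin 2 → ℝ, bb (B.mulVec p) (B.mulVec q) = B * bb p q * Bᵀ) := by
  refine ⟨?_, bbB B⟩
  refine Prod.ext (triple x y z) ?_
  dsimp only
  rw [triple, bbB, Matrix.mulVec_mulVec]
end
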